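/- arXiv:2007.04613 — 2 statements merged into one kernel-verified Lean document; each statement's English description precedes it below -/
import Mathlib

section
/- For all M, L ≥ 0 there exists a constant C > 0, depending only on M, L and the dimension d, with the following property: whenever ρ, ρ̄ : ℝ^d → [0, ∞) are integrable with ∫ρ̄ dx ≤ 1, ū : ℝ^d → ℝ^d is measurable with ρ̄|ū|² and ρ̄|ū − u|² integrable, and u : ℝ^d → ℝ^d is bounded by M and Lipschitz with constant L, then for every ψ : ℝ^d → ℝ with sup_x |ψ(x)| ≤ 1 and Lipschitz constant ≤ 1 and all indices i, j ∈ {1, …, d}, one has |∫_{ℝ^d} ψ(x)(ρ̄(x)ū_i(x)ū_j(x) − ρ(x)u_i(x)u_j(x)) dx| ≤ ∫_{ℝ^d} ρ̄ |ū − u|² dx + C (∫_{ℝ^d} ρ̄ |ū − u|² dx)^{1/2} + C · d_BL(ρ̄, ρ). -/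
open MeasureTheory

noncomputable def dBL {d : ℕ} (ρ₁ ρ₂ : EuclideanSpace ℝ (Fin d) → ℝ) : ℝ :=
  ⨆ ψ : {ψ : EuclideanSpace ℝ (Fin d) → ℝ // (∀ x, |ψ x| ≤ 1) ∧ LipschitzWith 1 ψ},
    |∫ x, ψ.1 x * (ρ₁ x - ρ₂ x)|

lemma coord_abs_le_norm {d : ℕ} (v : EuclideanSpace ℝ (Fin d)) (i : Fin d) : |v i| ≤ ‖v‖ := by
  rw [EuclideanSpace.norm_eq]
  calc |v i| = Real.sqrt (‖v i‖ ^ 2) := by rw [Real.sqrt_sq_eq_abs]; simp [abs_abs]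
    _ ≤ _ := Real.sqrt_le_sqrt (Finset.single_le_sum (f := fun k => ‖v k‖ ^ 2)
        (fun k _ => by positivity) (Finset.mem_univ i))

lemma abs_int_le {d : ℕ} (f : EuclideanSpace ℝ (Fin d) → ℝ) : |∫ x, f x| ≤ ∫ x, |f x| := by
  simpa [Real.norm_eq_abs] using
    norm_integral_le_integral_norm (μ := (volume : Measure (EuclideanSpace ℝ (Fin d)))) f

lemma dBL_bddAbove {d : ℕ} {ρ₁ ρ₂ : EuclideanSpace ℝ (Fin d) → ℝ}
    (h₁ : Integrable ρ₁) (h₂ : Integrable ρ₂) :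
    BddAbove (Set.range fun ψ : {ψ : EuclideanSpace ℝ (Fin d) → ℝ //
      (∀ x, |ψ x| ≤ 1) ∧ LipschitzWith 1 ψ} => |∫ x, ψ.1 x * (ρ₁ x - ρ₂ x)|) := by
  refine ⟨∫ x, |ρ₁ x - ρ₂ x|, ?_⟩
  rintro r ⟨⟨ψ, hb, hl⟩, rfl⟩
  have hg : Integrable (fun x => ρ₁ x - ρ₂ x) := h₁.sub h₂
  have hint : Integrable (fun x => ψ x * (ρ₁ x - ρ₂ x)) :=
    hg.bdd_mul hl.continuous.aestronglyMeasurable (c := 1) (Filter.Eventually.of_forall fun x => by simpa using hb x)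
  calc |∫ x, ψ x * (ρ₁ x - ρ₂ x)| ≤ ∫ x, |ψ x * (ρ₁ x - ρ₂ x)| := abs_int_le _
    _ ≤ ∫ x, |ρ₁ x - ρ₂ x| := by
        refine integral_mono hint.abs hg.abs fun x => ?_
        rw [abs_mul]
        exact mul_le_of_le_one_left (abs_nonneg _) (hb x)

lemma le_dBL {d : ℕ} {ρ₁ ρ₂ : EuclideanSpace ℝ (Fin d) → ℝ}
    (h₁ : Integrable ρ₁) (h₂ : Integrable ρ₂)
    (ψ : EuclideanSpace ℝ (Fin d) → ℝ) (hb : ∀ x, |ψ x| ≤ 1) (hl : LipschitzWith 1 ψ) :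
    |∫ x, ψ x * (ρ₁ x - ρ₂ x)| ≤ dBL ρ₁ ρ₂ :=
  le_ciSup (dBL_bddAbove h₁ h₂) ⟨ψ, hb, hl⟩

lemma dBL_nonneg {d : ℕ} {ρ₁ ρ₂ : EuclideanSpace ℝ (Fin d) → ℝ}
    (h₁ : Integrable ρ₁) (h₂ : Integrable ρ₂) : 0 ≤ dBL ρ₁ ρ₂ := by
  have := le_dBL h₁ h₂ (fun _ => 0) (fun x => by simp) (LipschitzWith.const' 0)
  simpa using this

/-- Error estimate between convection terms in bounded Lipschitz distance: for all
`M, L ≥ 0` there is `C > 0`, depending only on `M`, `L`, `d`, such that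
`|∫ ψ (ρ̄ū_iū_j − ρu_iu_j)| ≤ ∫ρ̄|ū−u|² + C(∫ρ̄|ū−u|²)^{1/2} + C d_BL(ρ̄, ρ)` for all
admissible data and all bounded 1-Lipschitz test functions `ψ`. -/
theorem stmt_9 (d : ℕ) (M : ℝ) (L : NNReal) (hM : 0 ≤ M) :
    ∃ C > (0 : ℝ), ∀ (ρ ρ' : EuclideanSpace ℝ (Fin d) → ℝ)
      (u u' : EuclideanSpace ℝ (Fin d) → EuclideanSpace ℝ (Fin d)),
      (∀ x, 0 ≤ ρ x) → (∀ x, 0 ≤ ρ' x) → Integrable ρ → Integrable ρ' →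
      (∫ x, ρ' x) ≤ 1 → Measurable u' →
      Integrable (fun x => ρ' x * ‖u' x‖ ^ 2) →
      Integrable (fun x => ρ' x * ‖u' x - u x‖ ^ 2) →
      (∀ x, ‖u x‖ ≤ M) → LipschitzWith L u →
      ∀ ψ : EuclideanSpace ℝ (Fin d) → ℝ, (∀ x, |ψ x| ≤ 1) → LipschitzWith 1 ψ →
      ∀ i j : Fin d,
        |∫ x, ψ x * (ρ' x * u' x i * u' x j - ρ x * u x i * u x j)| ≤
          (∫ x, ρ' x * ‖u' x - u x‖ ^ 2)
            + C * Real.sqrt (∫ x, ρ' x * ‖u' x - u x‖ ^ 2) + C * dBL ρ' ρ := by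
  set K : ℝ := 1 + M ^ 2 + 2 * M * (L : ℝ) with hK
  have hKpos : 0 < K := by positivity
  refine ⟨2 * M + K, by linarith, ?_⟩
  intro ρ ρ' u u' hρ hρ' hρint hρ'int hmass hu'm hint1 hint2 huM huLip ψ hψb hψLip i j
  set ε : ℝ := ∫ x, ρ' x * ‖u' x - u x‖ ^ 2 with hε
  have hεnn : 0 ≤ ε := integral_nonneg fun x => mul_nonneg (hρ' x) (sq_nonneg _)
  set s : ℝ := Real.sqrt ε with hs
  have hsnn : 0 ≤ s := Real.sqrt_nonneg _
  -- measurability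
  have hum : Measurable u := huLip.continuous.measurable
  have hψm : AEStronglyMeasurable ψ volume := hψLip.continuous.aestronglyMeasurable
  have hproj : ∀ i : Fin d, Measurable fun v : EuclideanSpace ℝ (Fin d) => v i :=
    fun i => (EuclideanSpace.proj (𝕜 := ℝ) i).continuous.measurable
  have hu'i : ∀ k : Fin d, AEStronglyMeasurable (fun x => u' x k) volume :=
    fun k => ((hproj k).comp hu'm).aestronglyMeasurable
  have hui : ∀ k : Fin d, AEStronglyMeasurable (fun x => u x k) volume :=
    fun k => ((hproj k).comp hum).aestronglyMeasurable
  have hρ'm : AEStronglyMeasurable ρ' volume := hρ'int.aestronglyMeasurable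
  have hdiff : ∀ k : Fin d, AEStronglyMeasurable (fun x => u' x k - u x k) volume :=
    fun k => (hu'i k).sub (hui k)
  have hnormdiff : AEStronglyMeasurable (fun x => ‖u' x - u x‖) volume :=
    ((hu'm.sub hum).norm).aestronglyMeasurable
  -- coordinate bounds
  have hcoordu : ∀ x k, |u x k| ≤ M := fun x k => (coord_abs_le_norm _ k).trans (huM x)
  have hcoordd : ∀ x k, |u' x k - u x k| ≤ ‖u' x - u x‖ := fun x k => by
    simpa using coord_abs_le_norm (u' x - u x) k
  have hnn1 : ∀ x, (0:ℝ) ≤ ρ' x * ‖u' x - u x‖ := fun x =>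
    mul_nonneg (hρ' x) (norm_nonneg _)
  -- integrability of ρ' * ‖u' - u‖
  have hint3 : Integrable (fun x => ρ' x * ‖u' x - u x‖) := by
    have hI : Integrable (fun x => (ρ' x + ρ' x * ‖u' x - u x‖ ^ 2) / 2) :=
      (hρ'int.add hint2).div_const 2
    refine hI.mono (hρ'm.mul hnormdiff) (Filter.Eventually.of_forall fun x => ?_)
    have h1 : ρ' x * ‖u' x - u x‖ ≤ (ρ' x + ρ' x * ‖u' x - u x‖ ^ 2) / 2 := by
      nlinarith [mul_nonneg (hρ' x) (sq_nonneg (‖u' x - u x‖ - 1))]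
    rw [Real.norm_eq_abs, Real.norm_eq_abs, abs_of_nonneg (hnn1 x), abs_of_nonneg
      (div_nonneg (add_nonneg (hρ' x) (mul_nonneg (hρ' x) (sq_nonneg _))) two_pos.le)]
    exact h1
  -- key bound: ∫ ρ'|u'-u| ≤ s
  have hcs : (∫ x, ρ' x * ‖u' x - u x‖) ≤ s := by
    rcases eq_or_lt_of_le hεnn with h0 | hpos
    · have hae : (fun x => ρ' x * ‖u' x - u x‖ ^ 2) =ᵐ[volume] 0 := by
        rw [← integral_eq_zero_iff_of_nonneg (fun x => mul_nonneg (hρ' x) (sq_nonneg _)) hint2]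
        exact h0.symm
      have hae' : (fun x => ρ' x * ‖u' x - u x‖) =ᵐ[volume] 0 := by
        filter_upwards [hae] with x hx
        simp only [Pi.zero_apply] at hx ⊢
        rcases mul_eq_zero.1 hx with h | h
        · simp [h]
        · have : ‖u' x - u x‖ = 0 := by
            have := sq_eq_zero_iff.1 h
            simpa using this
          simp [this]
      have : (∫ x, ρ' x * ‖u' x - u x‖) = 0 := by
        rw [integral_congr_ae hae']; simp
      rw [this]; exact hsnn
    · have hspos : 0 < s := Real.sqrt_pos.2 hpos
      have hpt : ∀ x, ρ' x * ‖u' x - u x‖ ≤ (s * ρ' x + ρ' x * ‖u' x - u x‖ ^ 2 / s) / 2 := by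
        intro x
        have hv : 2 * ρ' x * ‖u' x - u x‖ - s * ρ' x ≤ ρ' x * ‖u' x - u x‖ ^ 2 / s := by
          rw [le_div_iff₀ hspos]
          nlinarith [mul_nonneg (hρ' x) (sq_nonneg (‖u' x - u x‖ - s))]
        linarith
      have hrhs : Integrable (fun x => (s * ρ' x + ρ' x * ‖u' x - u x‖ ^ 2 / s) / 2) :=
        (((hρ'int.const_mul s).add (hint2.div_const s)).div_const 2)
      calc (∫ x, ρ' x * ‖u' x - u x‖)
          ≤ ∫ x, (s * ρ' x + ρ' x * ‖u' x - u x‖ ^ 2 / s) / 2 :=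
            integral_mono hint3 hrhs hpt
        _ = (s * (∫ x, ρ' x) + ε / s) / 2 := by
            rw [integral_div, integral_add (hρ'int.const_mul s) (hint2.div_const s),
              integral_const_mul, MeasureTheory.integral_div]
        _ ≤ (s * 1 + ε / s) / 2 := by
            have := mul_le_mul_of_nonneg_left hmass hsnn
            linarith
        _ = s := by rw [hs, Real.div_sqrt]; ring
  -- the four pieces
  set g1 : EuclideanSpace ℝ (Fin d) → ℝ :=
    fun x => ψ x * (ρ' x * (u' x i - u x i) * (u' x j - u x j)) with hg1
  set g2 : EuclideanSpace ℝ (Fin d) → ℝ :=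
    fun x => ψ x * (ρ' x * (u' x i - u x i) * u x j) with hg2
  set g3 : EuclideanSpace ℝ (Fin d) → ℝ :=
    fun x => ψ x * (ρ' x * u x i * (u' x j - u x j)) with hg3
  set g4 : EuclideanSpace ℝ (Fin d) → ℝ :=
    fun x => ψ x * (u x i * u x j) * (ρ' x - ρ x) with hg4
  have hbψ : ∀ x, |ψ x| ≤ 1 := hψb
  -- pointwise bounds on pieces
  have hpb1 : ∀ x, |g1 x| ≤ ρ' x * ‖u' x - u x‖ ^ 2 := by
    intro x
    rw [hg1]; simp only
    rw [abs_mul, abs_mul, abs_mul, abs_of_nonneg (hρ' x)]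
    calc |ψ x| * (ρ' x * |u' x i - u x i| * |u' x j - u x j|)
        ≤ 1 * (ρ' x * ‖u' x - u x‖ * ‖u' x - u x‖) := by
          refine mul_le_mul (hbψ x) ?_
            (mul_nonneg (mul_nonneg (hρ' x) (abs_nonneg _)) (abs_nonneg _)) zero_le_one
          exact mul_le_mul (mul_le_mul_of_nonneg_left (hcoordd x i) (hρ' x)) (hcoordd x j)
            (abs_nonneg _) (hnn1 x)
      _ = ρ' x * ‖u' x - u x‖ ^ 2 := by ring
  have hpb2 : ∀ x, |g2 x| ≤ M * (ρ' x * ‖u' x - u x‖) := by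
    intro x
    rw [hg2]; simp only
    rw [abs_mul, abs_mul, abs_mul, abs_of_nonneg (hρ' x)]
    calc |ψ x| * (ρ' x * |u' x i - u x i| * |u x j|)
        ≤ 1 * (ρ' x * ‖u' x - u x‖ * M) := by
          refine mul_le_mul (hbψ x) ?_
            (mul_nonneg (mul_nonneg (hρ' x) (abs_nonneg _)) (abs_nonneg _)) zero_le_one
          exact mul_le_mul (mul_le_mul_of_nonneg_left (hcoordd x i) (hρ' x)) (hcoordu x j)
            (abs_nonneg _) (hnn1 x)
      _ = M * (ρ' x * ‖u' x - u x‖) := by ring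
  have hpb3 : ∀ x, |g3 x| ≤ M * (ρ' x * ‖u' x - u x‖) := by
    intro x
    rw [hg3]; simp only
    rw [abs_mul, abs_mul, abs_mul, abs_of_nonneg (hρ' x)]
    calc |ψ x| * (ρ' x * |u x i| * |u' x j - u x j|)
        ≤ 1 * (ρ' x * M * ‖u' x - u x‖) := by
          refine mul_le_mul (hbψ x) ?_
            (mul_nonneg (mul_nonneg (hρ' x) (abs_nonneg _)) (abs_nonneg _)) zero_le_one
          exact mul_le_mul (mul_le_mul_of_nonneg_left (hcoordu x i) (hρ' x)) (hcoordd x j)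
            (abs_nonneg _) (mul_nonneg (hρ' x) hM)
      _ = M * (ρ' x * ‖u' x - u x‖) := by ring
  -- integrability of pieces
  have hig1 : Integrable g1 := by
    refine hint2.mono (hψm.mul ((hρ'm.mul (hdiff i)).mul (hdiff j)))
      (Filter.Eventually.of_forall fun x => ?_)
    rw [Real.norm_eq_abs, Real.norm_eq_abs,
      abs_of_nonneg (mul_nonneg (hρ' x) (sq_nonneg (‖u' x - u x‖)))]
    exact hpb1 x
  have hig2 : Integrable g2 := by
    refine (hint3.const_mul M).mono (hψm.mul ((hρ'm.mul (hdiff i)).mul (hui j)))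
      (Filter.Eventually.of_forall fun x => ?_)
    rw [Real.norm_eq_abs, Real.norm_eq_abs,
      abs_of_nonneg (mul_nonneg hM (hnn1 x))]
    exact hpb2 x
  have hig3 : Integrable g3 := by
    refine (hint3.const_mul M).mono (hψm.mul ((hρ'm.mul (hui i)).mul (hdiff j)))
      (Filter.Eventually.of_forall fun x => ?_)
    rw [Real.norm_eq_abs, Real.norm_eq_abs,
      abs_of_nonneg (mul_nonneg hM (hnn1 x))]
    exact hpb3 x
  have hig4 : Integrable g4 := by
    refine (hρ'int.sub hρint).bdd_mul (hψm.mul ((hui i).mul (hui j))) (c := M ^ 2) (Filter.Eventually.of_forall fun x => ?_)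
    rw [Real.norm_eq_abs, abs_mul, abs_mul]
    calc |ψ x| * (|u x i| * |u x j|) ≤ 1 * (M * M) :=
          mul_le_mul (hbψ x) (mul_le_mul (hcoordu x i) (hcoordu x j) (abs_nonneg _) hM)
            (mul_nonneg (abs_nonneg _) (abs_nonneg _)) zero_le_one
      _ = M ^ 2 := by ring
  -- decomposition
  have hdecomp : (fun x => ψ x * (ρ' x * u' x i * u' x j - ρ x * u x i * u x j))
      = fun x => g1 x + g2 x + g3 x + g4 x := by
    funext x
    simp only [hg1, hg2, hg3, hg4]
    ring
  -- bounds for each piece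
  have hb1 : |∫ x, g1 x| ≤ ε := by
    calc |∫ x, g1 x| ≤ ∫ x, |g1 x| := abs_int_le _
      _ ≤ ∫ x, ρ' x * ‖u' x - u x‖ ^ 2 := integral_mono hig1.abs hint2 hpb1
  have hcross : ∀ (g : EuclideanSpace ℝ (Fin d) → ℝ), Integrable g →
      (∀ x, |g x| ≤ M * (ρ' x * ‖u' x - u x‖)) → |∫ x, g x| ≤ M * s := by
    intro g hig hgb
    calc |∫ x, g x| ≤ ∫ x, |g x| := abs_int_le _
      _ ≤ ∫ x, M * (ρ' x * ‖u' x - u x‖) := integral_mono hig.abs (hint3.const_mul M) hgb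
      _ = M * ∫ x, ρ' x * ‖u' x - u x‖ := integral_const_mul _ _
      _ ≤ M * s := mul_le_mul_of_nonneg_left hcs hM
  have hb2 : |∫ x, g2 x| ≤ M * s := hcross g2 hig2 hpb2
  have hb3 : |∫ x, g3 x| ≤ M * s := hcross g3 hig3 hpb3
  -- the dBL piece
  have hb4 : |∫ x, g4 x| ≤ K * dBL ρ' ρ := by
    set φ : EuclideanSpace ℝ (Fin d) → ℝ := fun x => ψ x * (u x i * u x j) / K with hφ
    have hφb : ∀ x, |φ x| ≤ 1 := by
      intro x
      rw [hφ]
      simp only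
      rw [abs_div, abs_of_pos hKpos, div_le_one hKpos, abs_mul, abs_mul]
      calc |ψ x| * (|u x i| * |u x j|) ≤ 1 * (M * M) :=
            mul_le_mul (hbψ x) (mul_le_mul (hcoordu x i) (hcoordu x j) (abs_nonneg _) hM)
              (mul_nonneg (abs_nonneg _) (abs_nonneg _)) zero_le_one
        _ ≤ K := by rw [hK]; nlinarith [NNReal.coe_nonneg L]
    have hφl : LipschitzWith 1 φ := by
      apply LipschitzWith.of_dist_le_mul
      intro x y
      rw [Real.dist_eq, hφ]
      simp only [NNReal.coe_one, one_mul]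
      rw [div_sub_div_same, abs_div, abs_of_pos hKpos, div_le_iff₀ hKpos]
      have hψxy : |ψ x - ψ y| ≤ dist x y := by
        have := hψLip.dist_le_mul x y
        rwa [Real.dist_eq, NNReal.coe_one, one_mul] at this
      have huxy : ∀ k, |u x k - u y k| ≤ (L : ℝ) * dist x y := by
        intro k
        calc |u x k - u y k| = |(u x - u y) k| := by simp
          _ ≤ ‖u x - u y‖ := coord_abs_le_norm _ k
          _ = dist (u x) (u y) := (dist_eq_norm _ _).symm
          _ ≤ (L : ℝ) * dist x y := huLip.dist_le_mul x y
      have key : ψ x * (u x i * u x j) - ψ y * (u y i * u y j)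
          = (ψ x - ψ y) * (u x i * u x j) + ψ y * ((u x i - u y i) * u x j)
            + ψ y * (u y i * (u x j - u y j)) := by ring
      rw [key]
      have t1 : |(ψ x - ψ y) * (u x i * u x j)| ≤ dist x y * (M * M) := by
        rw [abs_mul, abs_mul]
        exact mul_le_mul hψxy (mul_le_mul (hcoordu x i) (hcoordu x j) (abs_nonneg _) hM)
          (mul_nonneg (abs_nonneg _) (abs_nonneg _)) dist_nonneg
      have t2 : |ψ y * ((u x i - u y i) * u x j)| ≤ ((L : ℝ) * dist x y) * M := by
        rw [abs_mul, abs_mul]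
        calc |ψ y| * (|u x i - u y i| * |u x j|) ≤ 1 * (((L : ℝ) * dist x y) * M) :=
              mul_le_mul (hbψ y) (mul_le_mul (huxy i) (hcoordu x j) (abs_nonneg _)
                (mul_nonneg (NNReal.coe_nonneg L) dist_nonneg))
                (mul_nonneg (abs_nonneg _) (abs_nonneg _)) zero_le_one
          _ = ((L : ℝ) * dist x y) * M := one_mul _
      have t3 : |ψ y * (u y i * (u x j - u y j))| ≤ M * ((L : ℝ) * dist x y) := by
        rw [abs_mul, abs_mul]
        calc |ψ y| * (|u y i| * |u x j - u y j|) ≤ 1 * (M * ((L : ℝ) * dist x y)) :=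
              mul_le_mul (hbψ y) (mul_le_mul (hcoordu y i) (huxy j) (abs_nonneg _) hM)
                (mul_nonneg (abs_nonneg _) (abs_nonneg _)) zero_le_one
          _ = M * ((L : ℝ) * dist x y) := one_mul _
      calc |(ψ x - ψ y) * (u x i * u x j) + ψ y * ((u x i - u y i) * u x j)
            + ψ y * (u y i * (u x j - u y j))|
          ≤ dist x y * (M * M) + ((L : ℝ) * dist x y) * M + M * ((L : ℝ) * dist x y) := by
            refine (abs_add_le _ _).trans ?_
            have h12 := (abs_add_le ((ψ x - ψ y) * (u x i * u x j))
              (ψ y * ((u x i - u y i) * u x j))).trans (add_le_add t1 t2)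
            linarith [t3]
        _ ≤ dist x y * K := by
            rw [hK]
            nlinarith [dist_nonneg (x := x) (y := y), NNReal.coe_nonneg L]
    have heq : (∫ x, g4 x) = K * ∫ x, φ x * (ρ' x - ρ x) := by
      rw [← integral_const_mul]
      congr 1
      funext x
      rw [hg4, hφ]
      field_simp
    rw [heq, abs_mul, abs_of_pos hKpos]
    exact mul_le_mul_of_nonneg_left (le_dBL hρ'int hρint φ hφb hφl) hKpos.le
  -- assemble
  have hdnn : 0 ≤ dBL ρ' ρ := dBL_nonneg hρ'int hρint
  have h12 : Integrable (fun x => g1 x + g2 x) := hig1.add hig2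
  have h123 : Integrable (fun x => g1 x + g2 x + g3 x) := h12.add hig3
  calc |∫ x, ψ x * (ρ' x * u' x i * u' x j - ρ x * u x i * u x j)|
      = |∫ x, (g1 x + g2 x + g3 x + g4 x)| := by rw [hdecomp]
    _ = |(∫ x, g1 x) + (∫ x, g2 x) + (∫ x, g3 x) + (∫ x, g4 x)| := by
        rw [integral_add h123 hig4, integral_add h12 hig3, integral_add hig1 hig2]
    _ ≤ |∫ x, g1 x| + |∫ x, g2 x| + |∫ x, g3 x| + |∫ x, g4 x| :=
        (abs_add_le _ _).trans (add_le_add ((abs_add_le _ _).trans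
          (add_le_add (abs_add_le _ _) le_rfl)) le_rfl)
    _ ≤ ε + M * s + M * s + K * dBL ρ' ρ :=
        add_le_add (add_le_add (add_le_add hb1 hb2) hb3) hb4
    _ ≤ ε + (2 * M + K) * s + (2 * M + K) * dBL ρ' ρ := by nlinarith [hKpos, hsnn, hdnn, hM]
end

section
/- Let ρ, ρ̄ : ℝ^d → (0, ∞) be measurable probability densities (∫ρ dx = ∫ρ̄ dx = 1), let u, ū : ℝ^d → ℝ^d be measurable with ρ̄|ū − u|² integrable, and let W : ℝ^d → ℝ be differentiable with |∇W(x)| ≤ K for all x. Then |∫_{ℝ^d} ρ̄(x) (ū(x) − u(x)) · (∇W ⋆ (ρ − ρ̄))(x) dx| ≤ 2K ∫_{ℝ^d} [ (ρ̄(x)/2) |ū(x) − u(x)|² + H(ρ̄(x)|ρ(x)) ] dx, where (∇W ⋆ g)(x) := ∫_{ℝ^d} ∇W(x − y) g(y) dy and H(a|b) := a log a − b log b − (1 + log b)(a − b). -/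
open MeasureTheory
open scoped RealInnerProductSpace

/-- Relative entropy of two positive real numbers:
`H(a|b) = a log a − b log b − (1 + log b)(a − b)`. -/
noncomputable def relEnt (a b : ℝ) : ℝ :=
  a * Real.log a - b * Real.log b - (1 + Real.log b) * (a - b)

lemma sq_sqrt_sub_le_relEnt {a b : ℝ} (ha : 0 < a) (hb : 0 < b) :
    (Real.sqrt a - Real.sqrt b) ^ 2 ≤ relEnt a b := by
  have hsa := Real.sq_sqrt ha.le
  have hsb := Real.sq_sqrt hb.le
  have hsa0 := Real.sqrt_pos.mpr ha
  have hsb0 := Real.sqrt_pos.mpr hb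
  have h1 : Real.log (Real.sqrt b / Real.sqrt a) ≤ Real.sqrt b / Real.sqrt a - 1 :=
    Real.log_le_sub_one_of_pos (by positivity)
  have h2 : Real.log (Real.sqrt b / Real.sqrt a) = (Real.log b - Real.log a) / 2 := by
    rw [Real.log_div (ne_of_gt hsb0) (ne_of_gt hsa0), Real.log_sqrt ha.le, Real.log_sqrt hb.le]
    ring
  rw [h2] at h1
  have hgoal : relEnt a b = a * (Real.log a - Real.log b) - (a - b) := by
    unfold relEnt; ring
  rw [hgoal]
  have h3 : a * ((Real.log b - Real.log a) / 2) ≤ a * (Real.sqrt b / Real.sqrt a - 1) :=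
    mul_le_mul_of_nonneg_left h1 ha.le
  have hdiv : a * (Real.sqrt b / Real.sqrt a) = Real.sqrt a * Real.sqrt b := by
    field_simp
    nlinarith [hsa]
  nlinarith [h3, hdiv]

lemma relEnt_nonneg {a b : ℝ} (ha : 0 < a) (hb : 0 < b) : 0 ≤ relEnt a b :=
  le_trans (sq_nonneg _) (sq_sqrt_sub_le_relEnt ha hb)

lemma abs_sub_le_relEnt {a b ε : ℝ} (ha : 0 < a) (hb : 0 < b) (hε : 0 < ε) :
    |a - b| ≤ ε * (a + b) + relEnt a b / (2 * ε) := by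
  have h1 := sq_sqrt_sub_le_relEnt ha hb
  have hsa := Real.sq_sqrt ha.le
  have hsb := Real.sq_sqrt hb.le
  have hsa0 := Real.sqrt_nonneg a
  have hsb0 := Real.sqrt_nonneg b
  have key : 2 * ε * |a - b| ≤ 2 * ε ^ 2 * (a + b) + relEnt a b := by
    rcases abs_cases (a - b) with ⟨h, _⟩ | ⟨h, _⟩ <;> rw [h] <;>
      nlinarith [sq_nonneg (ε * (Real.sqrt a + Real.sqrt b) - (Real.sqrt a - Real.sqrt b)),
        sq_nonneg (ε * (Real.sqrt a + Real.sqrt b) + (Real.sqrt a - Real.sqrt b)),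
        mul_nonneg (sq_nonneg ε) (sq_nonneg (Real.sqrt a - Real.sqrt b))]
  have h2 : ε * (a + b) + relEnt a b / (2 * ε) = (2 * ε ^ 2 * (a + b) + relEnt a b) / (2 * ε) := by
    field_simp
  rw [h2, le_div_iff₀ (by positivity : (0:ℝ) < 2 * ε)]
  nlinarith [key]

/-- For probability densities `ρ, ρ̄` and an interaction potential `W` with
`|∇W| ≤ K`, the interaction error term is controlled by the modulated kinetic
energy plus the relative entropy:
`|∫ ρ̄ (ū − u) · (∇W ⋆ (ρ − ρ̄))| ≤ 2K ∫ [(ρ̄/2)|ū − u|² + H(ρ̄|ρ)]`,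
the right-hand integral of the nonnegative integrand being taken in `[0, ∞]`. -/
theorem stmt_11 {d : ℕ} (ρ ρ' : EuclideanSpace ℝ (Fin d) → ℝ)
    (hρm : Measurable ρ) (hρ'm : Measurable ρ')
    (hρpos : ∀ x, 0 < ρ x) (hρ'pos : ∀ x, 0 < ρ' x)
    (hρi : Integrable ρ) (hρ'i : Integrable ρ')
    (hρ1 : ∫ x, ρ x = 1) (hρ'1 : ∫ x, ρ' x = 1)
    (u u' : EuclideanSpace ℝ (Fin d) → EuclideanSpace ℝ (Fin d))
    (hum : Measurable u) (hu'm : Measurable u')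
    (h3 : Integrable (fun x => ρ' x * ‖u' x - u x‖ ^ 2))
    (W : EuclideanSpace ℝ (Fin d) → ℝ) (hW : Differentiable ℝ W)
    (K : ℝ) (hK : ∀ x, ‖gradient W x‖ ≤ K) :
    ENNReal.ofReal
        |∫ x, ρ' x * ⟪u' x - u x, ∫ y, (ρ y - ρ' y) • gradient W (x - y)⟫| ≤
      ENNReal.ofReal (2 * K) *
        ∫⁻ x, ENNReal.ofReal (ρ' x / 2 * ‖u' x - u x‖ ^ 2 + relEnt (ρ' x) (ρ x)) := by
  have hK0 : 0 ≤ K := le_trans (norm_nonneg _) (hK 0)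
  rcases hK0.eq_or_lt with hK0' | hKpos
  · have hg0 : ∀ z, gradient W z = 0 := fun z =>
      norm_le_zero_iff.mp (le_trans (hK z) hK0'.ge)
    simp [hg0]
  have hvm : Measurable fun x => u' x - u x := hu'm.sub hum
  have hgm : Measurable fun y => ρ y - ρ' y := hρm.sub hρ'm
  have hHm : Measurable fun x => relEnt (ρ' x) (ρ x) := by
    unfold relEnt
    exact ((hρ'm.mul (Real.measurable_log.comp hρ'm)).sub
      (hρm.mul (Real.measurable_log.comp hρm))).sub
      ((measurable_const.add (Real.measurable_log.comp hρm)).mul (hρ'm.sub hρm))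
  have hφm : Measurable fun x => ρ' x / 2 * ‖u' x - u x‖ ^ 2 + relEnt (ρ' x) (ρ x) :=
    ((hρ'm.div_const 2).mul ((hvm.norm).pow_const 2)).add hHm
  have hφ0 : ∀ x, 0 ≤ ρ' x / 2 * ‖u' x - u x‖ ^ 2 + relEnt (ρ' x) (ρ x) := fun x =>
    add_nonneg (mul_nonneg (div_nonneg (hρ'pos x).le two_pos.le) (sq_nonneg _))
      (relEnt_nonneg (hρ'pos x) (hρpos x))
  have hGm : Measurable (gradient W) := by
    have h := measurable_fderiv ℝ W
    exact ((InnerProductSpace.toDual ℝ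
      (EuclideanSpace ℝ (Fin d))).symm.continuous.measurable).comp h
  have hgi : Integrable fun y => ρ y - ρ' y := hρi.sub hρ'i
  have hgia : Integrable fun y => |ρ y - ρ' y| := hgi.abs
  set M : ℝ := ∫ y, |ρ y - ρ' y| with hMdef
  have hM0 : 0 ≤ M := integral_nonneg fun y => abs_nonneg _
  have hint : ∀ x, Integrable fun y => (ρ y - ρ' y) • gradient W (x - y) := by
    intro x
    refine Integrable.mono' (hgia.const_mul K) ?_ ?_
    · exact (hgm.smul (hGm.comp (measurable_const.sub measurable_id))).aestronglyMeasurable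
    · filter_upwards with y
      calc ‖(ρ y - ρ' y) • gradient W (x - y)‖
          = ‖gradient W (x - y)‖ * |ρ y - ρ' y| := by
            rw [norm_smul, Real.norm_eq_abs, mul_comm]
        _ ≤ K * |ρ y - ρ' y| := mul_le_mul_of_nonneg_right (hK _) (abs_nonneg _)
  have hVle : ∀ x, ‖∫ y, (ρ y - ρ' y) • gradient W (x - y)‖ ≤ K * M := by
    intro x
    calc ‖∫ y, (ρ y - ρ' y) • gradient W (x - y)‖
        ≤ ∫ y, ‖(ρ y - ρ' y) • gradient W (x - y)‖ := norm_integral_le_integral_norm _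
      _ ≤ ∫ y, K * |ρ y - ρ' y| := by
          refine integral_mono (hint x).norm (hgia.const_mul K) fun y => ?_
          rw [norm_smul, Real.norm_eq_abs, mul_comm]
          exact mul_le_mul_of_nonneg_right (hK _) (abs_nonneg _)
      _ = K * M := integral_const_mul K _
  set E2 : ℝ := ∫ x, ρ' x * ‖u' x - u x‖ ^ 2 with hE2def
  have hE20 : 0 ≤ E2 := integral_nonneg fun x => mul_nonneg (hρ'pos x).le (sq_nonneg _)
  -- main real bound
  have key : |∫ x, ρ' x * ⟪u' x - u x, ∫ y, (ρ y - ρ' y) • gradient W (x - y)⟫| ≤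
      K * (E2 / 2) + K * M ^ 2 / 2 := by
    have hBint : Integrable fun x =>
        K * (ρ' x * ‖u' x - u x‖ ^ 2) / 2 + K * M ^ 2 / 2 * ρ' x :=
      ((h3.const_mul K).div_const 2).add (hρ'i.const_mul _)
    have hptwise : ∀ x, |ρ' x * ⟪u' x - u x, ∫ y, (ρ y - ρ' y) • gradient W (x - y)⟫| ≤
        K * (ρ' x * ‖u' x - u x‖ ^ 2) / 2 + K * M ^ 2 / 2 * ρ' x := by
      intro x
      have h1 : |ρ' x * ⟪u' x - u x, ∫ y, (ρ y - ρ' y) • gradient W (x - y)⟫| ≤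
          ρ' x * (‖u' x - u x‖ * (K * M)) := by
        rw [abs_mul, abs_of_pos (hρ'pos x)]
        refine mul_le_mul_of_nonneg_left ?_ (hρ'pos x).le
        exact le_trans (abs_real_inner_le_norm _ _)
          (mul_le_mul_of_nonneg_left (hVle x) (norm_nonneg _))
      refine h1.trans ?_
      nlinarith [mul_nonneg (mul_nonneg hK0 (hρ'pos x).le) (sq_nonneg (‖u' x - u x‖ - M))]
    calc |∫ x, ρ' x * ⟪u' x - u x, ∫ y, (ρ y - ρ' y) • gradient W (x - y)⟫|
        ≤ ∫ x, |ρ' x * ⟪u' x - u x, ∫ y, (ρ y - ρ' y) • gradient W (x - y)⟫| := by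
          have := norm_integral_le_integral_norm (μ := volume)
            (fun x => ρ' x * ⟪u' x - u x, ∫ y, (ρ y - ρ' y) • gradient W (x - y)⟫)
          simpa only [Real.norm_eq_abs] using this
      _ ≤ ∫ x, (K * (ρ' x * ‖u' x - u x‖ ^ 2) / 2 + K * M ^ 2 / 2 * ρ' x) :=
          integral_mono_of_nonneg (ae_of_all _ fun x => abs_nonneg _) hBint
            (ae_of_all _ hptwise)
      _ = K * E2 / 2 + K * M ^ 2 / 2 := by
          rw [integral_add ((h3.const_mul K).div_const 2) (hρ'i.const_mul _)]
          rw [integral_div, integral_const_mul, integral_const_mul, hρ'1, mul_one, hE2def]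
      _ = K * (E2 / 2) + K * M ^ 2 / 2 := by ring
  by_cases hφint : Integrable fun x => ρ' x / 2 * ‖u' x - u x‖ ^ 2 + relEnt (ρ' x) (ρ x)
  · have hki : Integrable fun x => ρ' x / 2 * ‖u' x - u x‖ ^ 2 := by
      refine (h3.div_const 2).congr (ae_of_all _ fun x => ?_)
      ring
    have hHi : Integrable fun x => relEnt (ρ' x) (ρ x) := by
      refine (hφint.sub hki).congr (ae_of_all _ fun x => ?_)
      simp only [Pi.sub_apply]
      ring
    set T : ℝ := ∫ x, relEnt (ρ' x) (ρ x) with hTdef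
    have hT0 : 0 ≤ T := integral_nonneg fun x => relEnt_nonneg (hρ'pos x) (hρpos x)
    have hMε : ∀ ε : ℝ, 0 < ε → M ≤ 2 * ε + T / (2 * ε) := by
      intro ε hε
      have hI1 : Integrable fun y => ε * (ρ y + ρ' y) := (hρi.add hρ'i).const_mul ε
      have hI2 : Integrable fun y => relEnt (ρ' y) (ρ y) / (2 * ε) := hHi.div_const _
      have hmono := integral_mono hgia (hI1.add hI2) (fun y => by
        calc |ρ y - ρ' y| = |ρ' y - ρ y| := abs_sub_comm _ _
          _ ≤ ε * (ρ' y + ρ y) + relEnt (ρ' y) (ρ y) / (2 * ε) :=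
            abs_sub_le_relEnt (hρ'pos y) (hρpos y) hε
          _ = ε * (ρ y + ρ' y) + relEnt (ρ' y) (ρ y) / (2 * ε) := by ring)
      calc M ≤ ∫ y, (ε * (ρ y + ρ' y) + relEnt (ρ' y) (ρ y) / (2 * ε)) := hmono
        _ = 2 * ε + T / (2 * ε) := by
            rw [integral_add hI1 hI2, integral_const_mul, integral_add hρi hρ'i,
              hρ1, hρ'1, integral_div, ← hTdef]
            ring
    have hM2T : M ^ 2 ≤ 4 * T := by
      rcases hT0.eq_or_lt with h0 | hTpos
      · have hM : M ≤ 0 := by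
          by_contra h
          push_neg at h
          have := hMε (M / 4) (by linarith)
          rw [← h0] at this
          simp at this
          linarith
        have hMeq : M = 0 := le_antisymm hM hM0
        simp [hMeq, ← h0]
      · have hs := Real.sqrt_pos.mpr hTpos
        have hsq := Real.sq_sqrt hT0
        have hb := hMε (Real.sqrt T / 2) (by positivity)
        have h2 : T / (2 * (Real.sqrt T / 2)) = Real.sqrt T := by
          rw [div_eq_iff (by positivity)]
          nlinarith
        rw [h2] at hb
        nlinarith
    have hφeq : (∫ x, (ρ' x / 2 * ‖u' x - u x‖ ^ 2 + relEnt (ρ' x) (ρ x))) = E2 / 2 + T := by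
      rw [integral_add hki hHi, ← hTdef]
      congr 1
      rw [hE2def, ← integral_div]
      congr 1; funext x; ring
    calc ENNReal.ofReal |∫ x, ρ' x * ⟪u' x - u x, ∫ y, (ρ y - ρ' y) • gradient W (x - y)⟫|
        ≤ ENNReal.ofReal (2 * K * (E2 / 2 + T)) := by
          refine ENNReal.ofReal_le_ofReal (key.trans ?_)
          nlinarith [mul_nonneg hK0 hE20, mul_nonneg hK0 hT0]
      _ = ENNReal.ofReal (2 * K) * ENNReal.ofReal (E2 / 2 + T) :=
          ENNReal.ofReal_mul (by positivity)
      _ = ENNReal.ofReal (2 * K) *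
          ∫⁻ x, ENNReal.ofReal (ρ' x / 2 * ‖u' x - u x‖ ^ 2 + relEnt (ρ' x) (ρ x)) := by
          rw [← hφeq, ofReal_integral_eq_lintegral_ofReal hφint (ae_of_all _ hφ0)]
  · have htop : (∫⁻ x, ENNReal.ofReal
        (ρ' x / 2 * ‖u' x - u x‖ ^ 2 + relEnt (ρ' x) (ρ x))) = ⊤ := by
      by_contra h
      exact hφint ⟨hφm.aestronglyMeasurable,
        (hasFiniteIntegral_iff_ofReal (ae_of_all _ hφ0)).mpr (lt_top_iff_ne_top.mpr h)⟩
    rw [htop, ENNReal.mul_top (by simp [ENNReal.ofReal_eq_zero]; linarith)]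
    exact le_top
end
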